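/- arXiv:1610.00050 — 10 statements merged into one kernel-verified Lean document; each statement's English description precedes it below -/
import Mathlib

section
/- Let K₀ = {(1,0)} ∪ ⋃ₙ {(1 - 3/2^{n+1}, 1/2^{n+1}), (1 - 1/2^n, 3/2^{n+1})} ⊆ ℝ², viewed as 2×2 diagonal matrices. Then K₀ is compact and no two distinct points X, Y of K₀ satisfy rank(X - Y) = 1 (equivalently, no two distinct points agree in exactly one coordinate). -/
/-!
The points of `K₀` other than `(1, 0)` form a staircase `(1 - s j, s (j + 1))`, `j ∈ ℕ`, where
`s = 1, 3/2, 1/2, 3/4, 1/4, 3/8, …` interleaves `1 / 2 ^ n` and `3 / 2 ^ (n + 1)`. As `s → 0`, the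
staircase converges to its corner `(1, 0)`, so `K₀` is compact. Since `3` is not a power of `2`, the
sequence `s` is injective and never vanishes, so each coordinate of a point of `K₀` determines the
point.
-/

/-- The set `K₀ ⊆ ℝ²`, identified with 2×2 diagonal matrices `diag(x,y) ↔ (x,y)`. -/
def K0 : Set (ℝ × ℝ) :=
  {(1, 0)} ∪ ⋃ n : ℕ,
    ({(1 - 3 / 2 ^ (n + 1), 1 / 2 ^ (n + 1)), (1 - 1 / 2 ^ n, 3 / 2 ^ (n + 1))} : Set (ℝ × ℝ))

open Filter Topology Set Function

def staircase (s : ℕ → ℝ) : Set (ℝ × ℝ) :=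
  insert (1, 0) (range fun j => (1 - s j, s (j + 1)))

section Staircase

variable {s : ℕ → ℝ}

theorem isCompact_staircase (hs : Tendsto s atTop (𝓝 0)) : IsCompact (staircase s) := by
  refine Tendsto.isCompact_insert_range ?_
  simpa using (tendsto_const_nhds.sub hs).prodMk_nhds (hs.comp (tendsto_add_atTop_nat 1))

theorem injOn_fst_staircase (hinj : Injective s) (hs : ∀ j, s j ≠ 0) :
    InjOn Prod.fst (staircase s) := by
  rintro _ (rfl | ⟨i, rfl⟩) _ (rfl | ⟨j, rfl⟩) h
  · rfl
  · exact absurd (sub_eq_self.1 h.symm) (hs j)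
  · exact absurd (sub_eq_self.1 h) (hs i)
  · rw [hinj (sub_right_injective h)]

theorem injOn_snd_staircase (hinj : Injective s) (hs : ∀ j, s j ≠ 0) :
    InjOn Prod.snd (staircase s) := by
  rintro _ (rfl | ⟨i, rfl⟩) _ (rfl | ⟨j, rfl⟩) h
  · rfl
  · exact absurd h.symm (hs _)
  · exact absurd h (hs _)
  · rw [add_right_cancel (hinj h)]

end Staircase

theorem div_two_pow_injective {c : ℝ} (hc : c ≠ 0) : Injective fun n : ℕ => c / 2 ^ n := by
  intro a b h
  simp only [div_eq_mul_inv, mul_right_inj' hc, inv_inj] at h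
  exact pow_right_injective₀ two_pos one_lt_two.ne' h

theorem one_div_two_pow_ne_three_div_two_pow (a b : ℕ) : (1 : ℝ) / 2 ^ a ≠ 3 / 2 ^ b := by
  rw [ne_eq, div_eq_div_iff (by positivity) (by positivity), one_mul]
  have h3 : ¬ 3 ∣ 2 ^ b := fun h => by simpa using Nat.prime_three.dvd_of_dvd_pow h
  exact_mod_cast fun h : 2 ^ b = 3 * 2 ^ a => h3 ⟨_, h⟩

noncomputable def stairSeq (j : ℕ) : ℝ := (if Even j then 1 else 3) / 2 ^ ((j + 1) / 2)

theorem stairSeq_two_mul (n : ℕ) : stairSeq (2 * n) = 1 / 2 ^ n := by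
  rw [stairSeq, if_pos (even_two_mul n), show (2 * n + 1) / 2 = n by omega]

theorem stairSeq_two_mul_add_one (n : ℕ) : stairSeq (2 * n + 1) = 3 / 2 ^ (n + 1) := by
  rw [stairSeq, if_neg (Nat.not_even_iff_odd.2 (odd_two_mul_add_one n)),
    show (2 * n + 1 + 1) / 2 = n + 1 by omega]

theorem stairSeq_pos (j : ℕ) : 0 < stairSeq j := by
  unfold stairSeq; split_ifs <;> positivity

theorem stairSeq_injective : Injective stairSeq := by
  intro i j h
  obtain ⟨a, rfl | rfl⟩ := Nat.even_or_odd' i <;> obtain ⟨b, rfl | rfl⟩ := Nat.even_or_odd' j <;>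
    simp only [stairSeq_two_mul, stairSeq_two_mul_add_one] at h
  · rw [div_two_pow_injective one_ne_zero h]
  · exact absurd h (one_div_two_pow_ne_three_div_two_pow _ _)
  · exact absurd h.symm (one_div_two_pow_ne_three_div_two_pow _ _)
  · rw [add_right_cancel (div_two_pow_injective three_ne_zero h)]

theorem tendsto_stairSeq : Tendsto stairSeq atTop (𝓝 0) := by
  have hexp : Tendsto (fun j : ℕ => (2 : ℝ) ^ ((j + 1) / 2)) atTop atTop :=
    (tendsto_pow_atTop_atTop_of_one_lt one_lt_two).comp
      ((Nat.tendsto_div_const_atTop two_ne_zero).comp (tendsto_add_atTop_nat 1))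
  refine squeeze_zero (fun j => (stairSeq_pos j).le) (fun j => ?_)
    ((tendsto_const_nhds (x := (3 : ℝ))).div_atTop hexp)
  unfold stairSeq
  gcongr
  split_ifs <;> norm_num

theorem K0_eq_staircase : K0 = staircase stairSeq := by
  have heven (n : ℕ) : (1 - stairSeq (2 * n), stairSeq (2 * n + 1)) =
      ((1 - 1 / 2 ^ n, 3 / 2 ^ (n + 1)) : ℝ × ℝ) := by
    rw [stairSeq_two_mul, stairSeq_two_mul_add_one]
  have hodd (n : ℕ) : (1 - stairSeq (2 * n + 1), stairSeq (2 * n + 1 + 1)) =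
      ((1 - 3 / 2 ^ (n + 1), 1 / 2 ^ (n + 1)) : ℝ × ℝ) := by
    rw [stairSeq_two_mul_add_one, show 2 * n + 1 + 1 = 2 * (n + 1) by ring, stairSeq_two_mul]
  ext X
  simp only [K0, staircase, singleton_union, mem_insert_iff, mem_iUnion, mem_singleton_iff,
    mem_range]
  refine or_congr_right ⟨?_, ?_⟩
  · rintro ⟨n, rfl | rfl⟩
    exacts [⟨2 * n + 1, hodd n⟩, ⟨2 * n, heven n⟩]
  · rintro ⟨j, rfl⟩
    obtain ⟨n, rfl | rfl⟩ := Nat.even_or_odd' j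
    exacts [⟨n, .inr (heven n)⟩, ⟨n, .inl (hodd n)⟩]

/-- `K₀` is compact and has no rank-one connections: no two distinct points of `K₀`
agree in exactly one coordinate. -/
theorem stmt0 :
    IsCompact K0 ∧
      ∀ X ∈ K0, ∀ Y ∈ K0, X ≠ Y →
        ¬((X.1 = Y.1 ∧ X.2 ≠ Y.2) ∨ (X.1 ≠ Y.1 ∧ X.2 = Y.2)) := by
  have hne (j : ℕ) : stairSeq j ≠ 0 := (stairSeq_pos j).ne'
  rw [K0_eq_staircase]
  refine ⟨isCompact_staircase tendsto_stairSeq, ?_⟩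
  rintro X hX Y hY hXY (⟨h, -⟩ | ⟨-, h⟩)
  · exact hXY (injOn_fst_staircase stairSeq_injective hne hX hY h)
  · exact hXY (injOn_snd_staircase stairSeq_injective hne hX hY h)
end

section
/- Let K₀ be as above and fix a positive integer N. Let P_n = (1 - 1/2^{n+1}, 1/2^{n+1}) and K = K₀ ∪ {P_N}. Then the point (0,1) = P_{-1} belongs to the lamination convex hull L(K) of K, where lamination combinations for diagonal matrices are segments between points agreeing in one coordinate. -/
/-- `S ⊆ ℝ²` (identified with diagonal matrices) is lamination convex: whenever two points of
`S` agree in exactly one coordinate (i.e. the corresponding diagonal matrices are rank-one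
connected), the segment between them is contained in `S`. -/
def LamConvexDiag (S : Set (ℝ × ℝ)) : Prop :=
  ∀ X ∈ S, ∀ Y ∈ S,
    ((X.1 = Y.1 ∧ X.2 ≠ Y.2) ∨ (X.1 ≠ Y.1 ∧ X.2 = Y.2)) → segment ℝ X Y ⊆ S

/-- The lamination convex hull of `K`. -/
def LDiag (K : Set (ℝ × ℝ)) : Set (ℝ × ℝ) :=
  ⋂₀ {S | K ⊆ S ∧ LamConvexDiag S}

/-- The points `Pₙ = (1 - 1/2^(n+1), 1/2^(n+1))`. -/
noncomputable def Ppt (n : ℕ) : ℝ × ℝ := (1 - 1 / 2 ^ (n + 1), 1 / 2 ^ (n + 1))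

/-!
Write `t = 1/2^(n+1)`. The points `A = (1 - 3t, t)` and `B = (1 - 2t, 3t)` of `K₀` lie on the
horizontal, resp. vertical, line through `Q = (1 - 2t, t)`. Halving horizontally between `A` and
`(1 - t, t) = Pₙ` gives `Q`, then halving vertically between `Q` and `B` gives `(1 - 2t, 2t) = Pₙ₋₁`.
Starting from `P_N` and descending `N + 1` times reaches `P₋₁ = (0, 1)`.
-/

lemma two_mul_one_div_two_pow_succ (n : ℕ) : 2 * (1 / (2 : ℝ) ^ (n + 1)) = 1 / 2 ^ n := by
  rw [pow_succ]
  field_simp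

lemma staircase_corners_mem_K0 (n : ℕ) :
    (1 - 3 * (1 / 2 ^ (n + 1)), 1 / 2 ^ (n + 1)) ∈ K0 ∧
      (1 - 2 * (1 / 2 ^ (n + 1)), 3 * (1 / 2 ^ (n + 1))) ∈ K0 := by
  refine ⟨Or.inr (Set.mem_iUnion.2 ⟨n, Or.inl ?_⟩), Or.inr (Set.mem_iUnion.2 ⟨n, Or.inr ?_⟩)⟩
  · simp only [mul_one_div]
  · rw [two_mul_one_div_two_pow_succ, mul_one_div]
    rfl

section LDiag

variable {K : Set (ℝ × ℝ)}

lemma subset_LDiag : K ⊆ LDiag K :=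
  fun _ hx _ hS => hS.1 hx

lemma lamConvexDiag_LDiag : LamConvexDiag (LDiag K) :=
  fun X hX Y hY hXY _ hZ S hS => hS.2 X (hX S hS) Y (hY S hS) hXY hZ

lemma midpoint_mem_LDiag_of_fst_eq {x a b : ℝ} (hab : a ≠ b)
    (ha : (x, a) ∈ LDiag K) (hb : (x, b) ∈ LDiag K) : (x, (a + b) / 2) ∈ LDiag K := by
  refine lamConvexDiag_LDiag _ ha _ hb (Or.inl ⟨rfl, hab⟩) ⟨1 / 2, 1 / 2, ?_⟩
  norm_num [Prod.ext_iff]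
  constructor <;> ring

lemma midpoint_mem_LDiag_of_snd_eq {y a b : ℝ} (hab : a ≠ b)
    (ha : (a, y) ∈ LDiag K) (hb : (b, y) ∈ LDiag K) : ((a + b) / 2, y) ∈ LDiag K := by
  refine lamConvexDiag_LDiag _ ha _ hb (Or.inr ⟨hab, rfl⟩) ⟨1 / 2, 1 / 2, ?_⟩
  norm_num [Prod.ext_iff]
  constructor <;> ring

lemma staircase_step_mem_LDiag {t : ℝ} (ht : t ≠ 0)
    (hA : (1 - 3 * t, t) ∈ LDiag K) (hB : (1 - 2 * t, 3 * t) ∈ LDiag K)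
    (hP : (1 - t, t) ∈ LDiag K) : (1 - 2 * t, 2 * t) ∈ LDiag K := by
  have hQ : (1 - 2 * t, t) ∈ LDiag K := by
    have := midpoint_mem_LDiag_of_snd_eq (by contrapose! ht; linarith) hA hP
    convert this using 2
    ring
  have := midpoint_mem_LDiag_of_fst_eq (by contrapose! ht; linarith) hQ hB
  convert this using 2
  ring

lemma zero_one_mem_LDiag_of_staircase_mem (hK : K0 ⊆ K) (m : ℕ)
    (hm : (1 - 1 / 2 ^ m, 1 / 2 ^ m) ∈ LDiag K) : ((0 : ℝ), (1 : ℝ)) ∈ LDiag K := by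
  induction m with
  | zero => simpa using hm
  | succ n ih =>
    apply ih
    obtain ⟨hA, hB⟩ := staircase_corners_mem_K0 n
    rw [← two_mul_one_div_two_pow_succ]
    exact staircase_step_mem_LDiag (by positivity) (subset_LDiag (hK hA))
      (subset_LDiag (hK hB)) hm

end LDiag

theorem stmt1_general (N : ℕ) :
    ((0 : ℝ), (1 : ℝ)) ∈ LDiag (K0 ∪ {Ppt N}) :=
  zero_one_mem_LDiag_of_staircase_mem Set.subset_union_left (N + 1)
    (subset_LDiag (Or.inr rfl))

/-- For any positive integer `N`, adding `P_N` to `K₀` forces `(0,1)` into the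
lamination convex hull. -/
theorem stmt1 (N : ℕ) (hN : 0 < N) :
    ((0 : ℝ), (1 : ℝ)) ∈ LDiag (K0 ∪ {Ppt N}) :=
  stmt1_general N
end

section
/- With ε ∈ (0,1) and X₁, X₂, X₃, X₄ as above, the set S = ⋃_{i=1}^4 [0, Xᵢ] (the union of the four segments from the zero matrix to the Xᵢ) is lamination convex: whenever A, B ∈ S and rank(A − B) ≤ 1, the segment [A,B] ⊆ S. -/
/-- The four matrices `X₁, X₂, X₃, X₄` from Proposition 4. -/
noncomputable def Xmat (ε : ℝ) : Fin 4 → Matrix (Fin 2) (Fin 2) ℝ :=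
  ![!![1, 0; 0, 0], !![0, 0; 0, 1], !![-ε, -1; -ε ^ 2, -ε], !![-ε, ε ^ 2; 1, -ε]]

lemma det_eq_zero_of_rank_le_one (M : Matrix (Fin 2) (Fin 2) ℝ) (h : M.rank ≤ 1) :
    M.det = 0 := by
  by_contra h0
  have hu : IsUnit M := (Matrix.isUnit_iff_isUnit_det M).mpr (isUnit_iff_ne_zero.mpr h0)
  have := Matrix.rank_of_isUnit M hu
  simp [this] at h

lemma mem_segment_zero {X A : Matrix (Fin 2) (Fin 2) ℝ}
    (h : A ∈ segment ℝ (0 : Matrix (Fin 2) (Fin 2) ℝ) X) :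
    ∃ s ∈ Set.Icc (0:ℝ) 1, A = s • X := by
  rw [segment_eq_image] at h
  obtain ⟨s, hs, hA⟩ := h
  exact ⟨s, hs, by simp [← hA]⟩

set_option maxHeartbeats 2000000 in
/-- The union of the four segments `[0, Xᵢ]` is lamination convex. -/
theorem stmt6 (ε : ℝ) (hε : ε ∈ Set.Ioo (0 : ℝ) 1) :
    ∀ A ∈ ⋃ i, segment ℝ (0 : Matrix (Fin 2) (Fin 2) ℝ) (Xmat ε i),
      ∀ B ∈ ⋃ i, segment ℝ (0 : Matrix (Fin 2) (Fin 2) ℝ) (Xmat ε i),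
        (A - B).rank ≤ 1 →
          segment ℝ A B ⊆ ⋃ i, segment ℝ (0 : Matrix (Fin 2) (Fin 2) ℝ) (Xmat ε i) := by
  obtain ⟨hε0, hε1⟩ := hε
  intro A hA B hB hrank
  rw [Set.mem_iUnion] at hA hB
  obtain ⟨i, hA⟩ := hA
  obtain ⟨j, hB⟩ := hB
  obtain ⟨s, hs, rfl⟩ := mem_segment_zero hA
  obtain ⟨t, ht, rfl⟩ := mem_segment_zero hB
  by_cases hij : i = j
  · subst hij
    exact Set.Subset.trans
      ((convex_segment _ _).segment_subset hA hB)
      (Set.subset_iUnion (fun k => segment ℝ (0 : Matrix (Fin 2) (Fin 2) ℝ) (Xmat ε k)) i)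
  · have hdet : (s • Xmat ε i - t • Xmat ε j).det = 0 :=
      det_eq_zero_of_rank_le_one _ hrank
    have hst : s = 0 ∨ t = 0 := by
      fin_cases i <;> fin_cases j <;> simp_all [Xmat, Matrix.det_fin_two] <;>
        first
        | tauto
        | (by_contra hc
           push_neg at hc
           obtain ⟨hc1, hc2⟩ := hc
           have hs' : 0 < s := lt_of_le_of_ne hs.1 (Ne.symm hc1)
           have ht' : 0 < t := lt_of_le_of_ne ht.1 (Ne.symm hc2)
           nlinarith [mul_pos hs' ht', mul_pos (mul_pos hs' ht') hε0,
             mul_pos (mul_pos (mul_pos hs' ht') hε0) hε0,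
             mul_pos (mul_pos hs' ht') (pow_pos hε0 4), sq_nonneg ε, sq_nonneg (s - t)])
    rcases hst with h | h
    · subst h
      simp only [zero_smul]
      refine Set.Subset.trans ?_ (Set.subset_iUnion (fun k => segment ℝ (0 : Matrix (Fin 2) (Fin 2) ℝ) (Xmat ε k)) j)
      exact (convex_segment _ _).segment_subset (left_mem_segment ℝ _ _) hB
    · subst h
      simp only [zero_smul]
      refine Set.Subset.trans ?_ (Set.subset_iUnion (fun k => segment ℝ (0 : Matrix (Fin 2) (Fin 2) ℝ) (Xmat ε k)) i)
      exact (convex_segment _ _).segment_subset hA (left_mem_segment ℝ _ _)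
end

section
/- With ε ∈ (0,1), X₁,…,X₄ as above and K = {0, X₁, X₂, X₃, X₄}, the lamination convex hull L(K) equals ⋃_{i=1}^4 [0, Xᵢ]. -/
/-- `S ⊆ ℝ^{2×2}` is lamination convex. -/
def LamConvex (S : Set (Matrix (Fin 2) (Fin 2) ℝ)) : Prop :=
  ∀ X ∈ S, ∀ Y ∈ S, (X - Y).rank = 1 → segment ℝ X Y ⊆ S

/-- The lamination convex hull of `K ⊆ ℝ^{2×2}`. -/
def lamHull (K : Set (Matrix (Fin 2) (Fin 2) ℝ)) : Set (Matrix (Fin 2) (Fin 2) ℝ) :=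
  ⋂₀ {S | K ⊆ S ∧ LamConvex S}

lemma rank_one_aux (M : Matrix (Fin 2) (Fin 2) ℝ) (u v : Fin 2 → ℝ)
    (h : M = Matrix.of fun i j => u i * v j) (hMne : M ≠ 0) : M.rank = 1 := by
  have hle : M.rank ≤ 1 := by
    have hfac : M = Matrix.replicateCol (Fin 1) u * Matrix.replicateRow (Fin 1) v := by
      ext i j
      simp [h, Matrix.mul_apply, Matrix.replicateCol, Matrix.replicateRow]
    calc M.rank ≤ (Matrix.replicateRow (Fin 1) v).rank := hfac ▸ Matrix.rank_mul_le_right _ _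
      _ ≤ Fintype.card (Fin 1) := Matrix.rank_le_card_height _
      _ = 1 := by simp
  have hne : M.rank ≠ 0 := by
    intro h0
    rw [Matrix.rank, Submodule.finrank_eq_zero, LinearMap.range_eq_bot] at h0
    apply hMne
    ext i j
    have h1 := congrFun (LinearMap.congr_fun h0 (Pi.single j 1)) i
    simpa [Matrix.mulVecLin_apply, Matrix.mulVec_single] using h1
  omega

lemma rank_neg_Xmat (ε : ℝ) (hε : ε ∈ Set.Ioo (0 : ℝ) 1) (i : Fin 4) :
    ((0 : Matrix (Fin 2) (Fin 2) ℝ) - Xmat ε i).rank = 1 := by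
  obtain ⟨hε0, hε1⟩ := hε
  fin_cases i
  · exact rank_one_aux _ ![-1, 0] ![1, 0] (by ext i j; fin_cases i <;> fin_cases j <;>
      simp [Xmat]) (by
        intro h
        have := congrFun (congrFun h 0) 0
        simp [Xmat] at this)
  · exact rank_one_aux _ ![0, -1] ![0, 1] (by ext i j; fin_cases i <;> fin_cases j <;>
      simp [Xmat]) (by
        intro h
        have := congrFun (congrFun h 1) 1
        simp [Xmat] at this)
  · exact rank_one_aux _ ![-1, -ε] ![-ε, -1] (by ext i j; fin_cases i <;> fin_cases j <;>
      simp [Xmat] <;> ring) (by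
        intro h
        have := congrFun (congrFun h 0) 1
        simp [Xmat] at this)
  · exact rank_one_aux _ ![ε, -1] ![1, -ε] (by ext i j; fin_cases i <;> fin_cases j <;>
      simp [Xmat] <;> ring) (by
        intro h
        have := congrFun (congrFun h 1) 0
        simp [Xmat] at this)

lemma det_ne_zero_aux (ε s t : ℝ) (hε0 : 0 < ε) (hs : 0 < s) (ht : 0 < t)
    (i j : Fin 4) (hij : i ≠ j) :
    (s • Xmat ε i - t • Xmat ε j).det ≠ 0 := by
  have key : ∀ (s t : ℝ), 0 < s → 0 < t → ∀ i j : Fin 4, i < j →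
      (s • Xmat ε i - t • Xmat ε j).det ≠ 0 := by
    intro s t hs ht i j hlt
    have h01 : (s • Xmat ε 0 - t • Xmat ε 1).det = -(s * t) := by
      simp [Xmat, Matrix.det_fin_two]
    have h02 : (s • Xmat ε 0 - t • Xmat ε 2).det = s * t * ε := by
      simp [Xmat, Matrix.det_fin_two]; ring
    have h03 : (s • Xmat ε 0 - t • Xmat ε 3).det = s * t * ε := by
      simp [Xmat, Matrix.det_fin_two]; ring
    have h12 : (s • Xmat ε 1 - t • Xmat ε 2).det = s * t * ε := by
      simp [Xmat, Matrix.det_fin_two]; ring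
    have h13 : (s • Xmat ε 1 - t • Xmat ε 3).det = s * t * ε := by
      simp [Xmat, Matrix.det_fin_two]; ring
    have h23 : (s • Xmat ε 2 - t • Xmat ε 3).det = -(s * t * (1 + ε ^ 2) ^ 2) := by
      simp [Xmat, Matrix.det_fin_two]; ring
    fin_cases i <;> fin_cases j <;>
      first
        | exact absurd hlt (by decide)
        | exact h01 ▸ neg_ne_zero.mpr (by positivity)
        | exact h02 ▸ ne_of_gt (by positivity)
        | exact h03 ▸ ne_of_gt (by positivity)
        | exact h12 ▸ ne_of_gt (by positivity)
        | exact h13 ▸ ne_of_gt (by positivity)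
        | exact h23 ▸ neg_ne_zero.mpr (by positivity)
  rcases lt_or_gt_of_ne hij with h | h
  · exact key s t hs ht i j h
  · have hk := key t s ht hs j i h
    rw [show s • Xmat ε i - t • Xmat ε j = -(t • Xmat ε j - s • Xmat ε i) by abel,
      Matrix.det_neg]
    simpa using hk

/-- For `K = {0, X₁, X₂, X₃, X₄}`, the lamination hull is the union of the four
segments `[0, Xᵢ]`. -/
theorem stmt7 (ε : ℝ) (hε : ε ∈ Set.Ioo (0 : ℝ) 1) :
    lamHull ({0} ∪ Set.range (Xmat ε)) =
      ⋃ i, segment ℝ (0 : Matrix (Fin 2) (Fin 2) ℝ) (Xmat ε i) := by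
  obtain ⟨hε0, hε1⟩ := hε
  apply subset_antisymm
  · apply Set.sInter_subset_of_mem
    constructor
    · rintro x (rfl | ⟨i, rfl⟩)
      · exact Set.mem_iUnion.2 ⟨0, left_mem_segment _ _ _⟩
      · exact Set.mem_iUnion.2 ⟨i, right_mem_segment _ _ _⟩
    · rintro X hX Y hY hrank
      obtain ⟨i, hXi⟩ := Set.mem_iUnion.1 hX
      obtain ⟨j, hYj⟩ := Set.mem_iUnion.1 hY
      by_cases hij : i = j
      · subst hij
        intro z hz
        exact Set.mem_iUnion.2 ⟨i, (convex_segment _ _).segment_subset hXi hYj hz⟩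
      · obtain ⟨a, b, ha, hb, hab, hXeq⟩ := id hXi
        obtain ⟨c, d, hc, hd, hcd, hYeq⟩ := id hYj
        have hXeq' : X = b • Xmat ε i := by rw [← hXeq]; simp
        have hYeq' : Y = d • Xmat ε j := by rw [← hYeq]; simp
        rcases eq_or_lt_of_le hb with hb0 | hbpos
        · have hX0 : X = 0 := by rw [hXeq', ← hb0]; simp
          intro z hz
          refine Set.mem_iUnion.2 ⟨j, (convex_segment _ _).segment_subset
            (left_mem_segment _ _ _) hYj ?_⟩
          rwa [hX0] at hz
        rcases eq_or_lt_of_le hd with hd0 | hdpos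
        · have hY0 : Y = 0 := by rw [hYeq', ← hd0]; simp
          intro z hz
          refine Set.mem_iUnion.2 ⟨i, (convex_segment _ _).segment_subset hXi
            (left_mem_segment _ _ _) ?_⟩
          rwa [hY0] at hz
        exfalso
        have hdet : (X - Y).det ≠ 0 := by
          rw [hXeq', hYeq']
          exact det_ne_zero_aux ε b d hε0 hbpos hdpos i j hij
        have h2 : (X - Y).rank = Fintype.card (Fin 2) :=
          Matrix.rank_of_isUnit _ ((Matrix.isUnit_iff_isUnit_det _).2
            (isUnit_iff_ne_zero.2 hdet))
        rw [hrank] at h2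
        simp at h2
  · rw [Set.iUnion_subset_iff]
    intro i x hx
    rw [lamHull, Set.mem_sInter]
    rintro S ⟨hKS, hS⟩
    have h0 : (0 : Matrix (Fin 2) (Fin 2) ℝ) ∈ S := hKS (Or.inl rfl)
    have hi : Xmat ε i ∈ S := hKS (Or.inr ⟨i, rfl⟩)
    exact hS 0 h0 (Xmat ε i) hi (rank_neg_Xmat ε ⟨hε0, hε1⟩ i) hx
end

section
/- Let X₀, Y₀ ∈ ℝ^{m×n} with rank(X₀ − Y₀) = 1, and let S = {X : rank(X − X₀) ≤ 1 and rank(X − Y₀) ≤ 1}. Then S = P₁ ∪ P₂ where, writing X₀ − Y₀ = v₀w₀ᵀ, P₁ = {Y₀ + x w₀ᵀ : x ∈ ℝᵐ} and P₂ = {Y₀ + v₀ yᵀ : y ∈ ℝⁿ}; moreover any two elements of P₁ differ by a matrix of rank ≤ 1, and likewise for P₂. -/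
/-!
Write `X - Y₀ = a bᵀ`, so that `X - X₀ = a bᵀ - v₀ w₀ᵀ`. If `a` is not parallel to `v₀` and `b`
is not parallel to `w₀`, some minor `b_j w₀_k - b_k w₀_j` is nonzero, and suitable combinations
of columns `j, k` of `a bᵀ - v₀ w₀ᵀ` recover both `a` and `v₀`, so that matrix has rank `2`.
So `b ∥ w₀` (`X ∈ P₁`) or `a ∥ v₀` (`X ∈ P₂`).
-/

open Matrix

namespace Matrix

variable {m n K : Type*} [Field K]

theorem exists_mul_sub_mul_ne_zero {b d : n → K} (h : LinearIndependent K ![b, d]) :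
    ∃ j k, b j * d k - b k * d j ≠ 0 := by
  by_contra! hminors
  obtain ⟨k, hk⟩ := Function.ne_iff.1 (h.ne_zero 0)
  have hcomb : d k • b + (-b k) • d = 0 := by
    ext j
    simpa [mul_comm, sub_eq_add_neg] using hminors j k
  exact hk (neg_eq_zero.1 (LinearIndependent.pair_iff.1 h _ _ hcomb).2)

variable [Fintype m] [Fintype n]

theorem exists_eq_vecMulVec_of_rank_le_one {A : Matrix m n K} (h : A.rank ≤ 1) :
    ∃ (a : m → K) (b : n → K), A = vecMulVec a b := by
  rw [rank_eq_finrank_span_cols] at h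
  obtain ⟨a, ha⟩ := (Submodule.finrank_le_one_iff_isPrincipal _).1 h
  have hcol (j : n) : ∃ c : K, c • a = A.col j :=
    Submodule.mem_span_singleton.1 (ha ▸ Submodule.subset_span ⟨j, rfl⟩)
  choose b hb using hcol
  refine ⟨a, b, ?_⟩
  ext i j
  simpa [vecMulVec_apply, mul_comm] using (congrFun (hb j) i).symm

theorem two_le_rank_vecMulVec_sub_vecMulVec {a c : m → K} {b d : n → K}
    (hac : LinearIndependent K ![a, c]) (hbd : LinearIndependent K ![b, d]) :
    2 ≤ (vecMulVec a b - vecMulVec c d).rank := by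
  obtain ⟨j, k, hjk⟩ := exists_mul_sub_mul_ne_zero hbd
  set M := vecMulVec a b - vecMulVec c d
  set V := Submodule.span K (Set.range M.col)
  have hcol (l : n) : b l • a - d l • c ∈ V := by
    have : M.col l = b l • a - d l • c := by ext i; simp [M, vecMulVec_apply, mul_comm]
    exact this ▸ Submodule.subset_span ⟨l, rfl⟩
  have ha : a ∈ V := by
    refine (V.smul_mem_iff hjk).1 ?_
    convert V.sub_mem (V.smul_mem (d k) (hcol j)) (V.smul_mem (d j) (hcol k)) using 1
    module
  have hc : c ∈ V := by
    refine (V.smul_mem_iff hjk).1 ?_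
    convert V.sub_mem (V.smul_mem (b k) (hcol j)) (V.smul_mem (b j) (hcol k)) using 1
    module
  have hle : Submodule.span K (Set.range ![a, c]) ≤ V := by
    rw [Submodule.span_le, Set.range_subset_iff]
    intro i
    fin_cases i
    · exact ha
    · exact hc
  calc 2 = Module.finrank K (Submodule.span K (Set.range ![a, c])) := by
        simp [finrank_span_eq_card hac]
    _ ≤ Module.finrank K V := Submodule.finrank_mono hle
    _ = M.rank := (rank_eq_finrank_span_cols M).symm

theorem rank_le_one_and_rank_sub_vecMulVec_le_one_iff {Z : Matrix m n K} {v : m → K}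
    {w : n → K} (hv : v ≠ 0) (hw : w ≠ 0) :
    Z.rank ≤ 1 ∧ (Z - vecMulVec v w).rank ≤ 1 ↔
      (∃ x, Z = vecMulVec x w) ∨ ∃ y, Z = vecMulVec v y := by
  constructor
  · rintro ⟨hZ, hZvw⟩
    obtain ⟨a, b, rfl⟩ := exists_eq_vecMulVec_of_rank_le_one hZ
    by_cases hb : ∃ c : K, c • w = b
    · obtain ⟨c, rfl⟩ := hb
      exact Or.inl ⟨c • a, by rw [vecMulVec_smul, smul_vecMulVec]⟩
    by_cases ha : ∃ c : K, c • v = a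
    · obtain ⟨c, rfl⟩ := ha
      exact Or.inr ⟨c • b, by rw [vecMulVec_smul, smul_vecMulVec]⟩
    push Not at ha hb
    have := two_le_rank_vecMulVec_sub_vecMulVec
      (linearIndependent_fin2 (f := ![a, v]) |>.2 ⟨hv, ha⟩)
      (linearIndependent_fin2 (f := ![b, w]) |>.2 ⟨hw, hb⟩)
    omega
  · rintro (⟨x, rfl⟩ | ⟨y, rfl⟩)
    · exact ⟨rank_vecMulVec_le _ _, by rw [← sub_vecMulVec]; exact rank_vecMulVec_le _ _⟩
    · exact ⟨rank_vecMulVec_le _ _, by rw [← vecMulVec_sub]; exact rank_vecMulVec_le _ _⟩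

end Matrix

theorem stmt8_general (m n : ℕ) (X₀ Y₀ : Matrix (Fin m) (Fin n) ℝ)
    (v₀ : Fin m → ℝ) (w₀ : Fin n → ℝ) (hv₀ : v₀ ≠ 0) (hw₀ : w₀ ≠ 0)
    (hfac : X₀ - Y₀ = vecMulVec v₀ w₀) :
    ({X | (X - X₀).rank ≤ 1 ∧ (X - Y₀).rank ≤ 1} : Set (Matrix (Fin m) (Fin n) ℝ)) =
        {X | ∃ x : Fin m → ℝ, X = Y₀ + vecMulVec x w₀} ∪
        {X | ∃ y : Fin n → ℝ, X = Y₀ + vecMulVec v₀ y} ∧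
      (∀ A ∈ {X : Matrix (Fin m) (Fin n) ℝ | ∃ x : Fin m → ℝ, X = Y₀ + vecMulVec x w₀},
        ∀ B ∈ {X : Matrix (Fin m) (Fin n) ℝ | ∃ x : Fin m → ℝ, X = Y₀ + vecMulVec x w₀},
          (A - B).rank ≤ 1) ∧
      (∀ A ∈ {X : Matrix (Fin m) (Fin n) ℝ | ∃ y : Fin n → ℝ, X = Y₀ + vecMulVec v₀ y},
        ∀ B ∈ {X : Matrix (Fin m) (Fin n) ℝ | ∃ y : Fin n → ℝ, X = Y₀ + vecMulVec v₀ y},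
          (A - B).rank ≤ 1) := by
  obtain rfl : X₀ = Y₀ + vecMulVec v₀ w₀ := eq_add_of_sub_eq' hfac
  refine ⟨?_, ?_, ?_⟩
  · ext X
    rw [Set.mem_ofPred_eq, sub_add_eq_sub_sub, and_comm,
      rank_le_one_and_rank_sub_vecMulVec_le_one_iff hv₀ hw₀]
    simp only [sub_eq_iff_eq_add', Set.mem_union, Set.mem_ofPred_eq]
  · rintro _ ⟨x, rfl⟩ _ ⟨x', rfl⟩
    rw [add_sub_add_left_eq_sub, ← sub_vecMulVec]
    exact rank_vecMulVec_le _ _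
  · rintro _ ⟨y, rfl⟩ _ ⟨y', rfl⟩
    rw [add_sub_add_left_eq_sub, ← vecMulVec_sub]
    exact rank_vecMulVec_le _ _

/-- Lemma `linalg` (i): if `X₀ - Y₀ = v₀ w₀ᵀ` has rank one, then the set of matrices
rank-one connected (in the weak sense) to both `X₀` and `Y₀` is the union of the two
planes `P₁ = {Y₀ + x w₀ᵀ}` and `P₂ = {Y₀ + v₀ yᵀ}`, and each plane consists of
rank-one directions. -/
theorem stmt8 (m n : ℕ) (X₀ Y₀ : Matrix (Fin m) (Fin n) ℝ)
    (v₀ : Fin m → ℝ) (w₀ : Fin n → ℝ) (hv₀ : v₀ ≠ 0) (hw₀ : w₀ ≠ 0)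
    (hfac : X₀ - Y₀ = vecMulVec v₀ w₀) (hrank : (X₀ - Y₀).rank = 1) :
    ({X | (X - X₀).rank ≤ 1 ∧ (X - Y₀).rank ≤ 1} : Set (Matrix (Fin m) (Fin n) ℝ)) =
        {X | ∃ x : Fin m → ℝ, X = Y₀ + vecMulVec x w₀} ∪
        {X | ∃ y : Fin n → ℝ, X = Y₀ + vecMulVec v₀ y} ∧
      (∀ A ∈ {X : Matrix (Fin m) (Fin n) ℝ | ∃ x : Fin m → ℝ, X = Y₀ + vecMulVec x w₀},
        ∀ B ∈ {X : Matrix (Fin m) (Fin n) ℝ | ∃ x : Fin m → ℝ, X = Y₀ + vecMulVec x w₀},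
          (A - B).rank ≤ 1) ∧
      (∀ A ∈ {X : Matrix (Fin m) (Fin n) ℝ | ∃ y : Fin n → ℝ, X = Y₀ + vecMulVec v₀ y},
        ∀ B ∈ {X : Matrix (Fin m) (Fin n) ℝ | ∃ y : Fin n → ℝ, X = Y₀ + vecMulVec v₀ y},
          (A - B).rank ≤ 1) :=
  stmt8_general m n X₀ Y₀ v₀ w₀ hv₀ hw₀ hfac
end

section
/- With notation as above (X₀ − Y₀ = v₀w₀ᵀ of rank one, P₁ = {Y₀ + x w₀ᵀ}, P₂ = {Y₀ + v₀ yᵀ}), if X ∈ P₁ \ P₂ and Y ∈ P₂ \ P₁, then rank(X − Y) > 1. -/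
/-!
Writing `X = Y₀ + x w₀ᵀ` and `Y = Y₀ + v₀ yᵀ`, we get `X - Y = x w₀ᵀ - v₀ yᵀ = [v₀ x] · [-y; w₀]`.
`X ∉ P₂` forces `x` not to be a multiple of `v₀`, and `Y ∉ P₁` forces `y` not to be a multiple
of `w₀`, so the left factor has independent columns and the right one independent rows: the
product has rank two.
-/

open Matrix

namespace Matrix

variable {l m n : Type*}

theorem rank_mul_eq_right_of_linearIndependent_col {R : Type*} [CommRing R] [Fintype l]
    [Fintype n] {A : Matrix m l R} (hA : LinearIndependent R A.col) (B : Matrix l n R) :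
    (A * B).rank = B.rank := by
  rw [rank, rank, mulVecLin_mul, LinearMap.range_comp]
  exact (Submodule.equivMapOfInjective _ (mulVec_injective_iff.mpr hA) _).finrank_eq.symm

theorem vecMulVec_sub_vecMulVec_eq_mul {R : Type*} [CommRing R] (x v : m → R) (w y : n → R) :
    vecMulVec x w - vecMulVec v y = (of ![v, x])ᵀ * of ![-y, w] := by
  ext i j
  simp [vecMulVec_apply, mul_apply, Fin.sum_univ_two]
  ring

theorem rank_vecMulVec_sub_vecMulVec {K : Type*} [Field K] [Fintype n] {x v : m → K}
    {w y : n → K} (hvx : LinearIndependent K ![v, x]) (hwy : LinearIndependent K ![w, y]) :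
    (vecMulVec x w - vecMulVec v y).rank = 2 := by
  rw [vecMulVec_sub_vecMulVec_eq_mul, rank_mul_eq_right_of_linearIndependent_col (by exact hvx)]
  have hyw : LinearIndependent K ![-y, w] := by
    rwa [LinearIndependent.pair_neg_left_iff, LinearIndependent.pair_symm_iff]
  simpa using hyw.rank_matrix (M := of ![-y, w])

end Matrix

theorem stmt9_general (m n : ℕ) (Y₀ : Matrix (Fin m) (Fin n) ℝ)
    (v₀ : Fin m → ℝ) (w₀ : Fin n → ℝ) (hv₀ : v₀ ≠ 0) (hw₀ : w₀ ≠ 0)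
    (X Y : Matrix (Fin m) (Fin n) ℝ)
    (hX : X ∈ {A : Matrix (Fin m) (Fin n) ℝ | ∃ x : Fin m → ℝ, A = Y₀ + vecMulVec x w₀} \
            {A : Matrix (Fin m) (Fin n) ℝ | ∃ y : Fin n → ℝ, A = Y₀ + vecMulVec v₀ y})
    (hY : Y ∈ {A : Matrix (Fin m) (Fin n) ℝ | ∃ y : Fin n → ℝ, A = Y₀ + vecMulVec v₀ y} \
            {A : Matrix (Fin m) (Fin n) ℝ | ∃ x : Fin m → ℝ, A = Y₀ + vecMulVec x w₀}) :
    1 < (X - Y).rank := by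
  obtain ⟨⟨x, rfl⟩, hXP₂⟩ := hX
  obtain ⟨⟨y, rfl⟩, hYP₁⟩ := hY
  have hvx : LinearIndependent ℝ ![v₀, x] := by
    refine (LinearIndependent.pair_iff' hv₀).mpr fun c hc => hXP₂ ⟨c • w₀, ?_⟩
    rw [← hc, smul_vecMulVec, vecMulVec_smul]
  have hwy : LinearIndependent ℝ ![w₀, y] := by
    refine (LinearIndependent.pair_iff' hw₀).mpr fun c hc => hYP₁ ⟨c • v₀, ?_⟩
    rw [← hc, smul_vecMulVec, vecMulVec_smul]
  rw [add_sub_add_left_eq_sub, rank_vecMulVec_sub_vecMulVec hvx hwy]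
  norm_num

/-- Lemma `linalg` (ii): with `X₀ - Y₀ = v₀ w₀ᵀ` of rank one and the planes
`P₁ = {Y₀ + x w₀ᵀ}`, `P₂ = {Y₀ + v₀ yᵀ}`, any `X ∈ P₁ \ P₂` and `Y ∈ P₂ \ P₁`
satisfy `rank (X - Y) > 1`. -/
theorem stmt9 (m n : ℕ) (X₀ Y₀ : Matrix (Fin m) (Fin n) ℝ)
    (v₀ : Fin m → ℝ) (w₀ : Fin n → ℝ) (hv₀ : v₀ ≠ 0) (hw₀ : w₀ ≠ 0)
    (hfac : X₀ - Y₀ = vecMulVec v₀ w₀) (hrank : (X₀ - Y₀).rank = 1)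
    (X Y : Matrix (Fin m) (Fin n) ℝ)
    (hX : X ∈ {A : Matrix (Fin m) (Fin n) ℝ | ∃ x : Fin m → ℝ, A = Y₀ + vecMulVec x w₀} \
            {A : Matrix (Fin m) (Fin n) ℝ | ∃ y : Fin n → ℝ, A = Y₀ + vecMulVec v₀ y})
    (hY : Y ∈ {A : Matrix (Fin m) (Fin n) ℝ | ∃ y : Fin n → ℝ, A = Y₀ + vecMulVec v₀ y} \
            {A : Matrix (Fin m) (Fin n) ℝ | ∃ x : Fin m → ℝ, A = Y₀ + vecMulVec x w₀}) :
    1 < (X - Y).rank :=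
  stmt9_general m n Y₀ v₀ w₀ hv₀ hw₀ X Y hX hY
end

section
/- If every pair of matrices in the support of a compactly supported probability measure μ on ℝ^{2×2} has det(X − Y) = 0 for all X, Y in the support, then the support of μ is contained in a 2-dimensional affine plane P such that rank(X − Y) ≤ 1 for all X, Y ∈ P, or the support is contained in a single rank-one line or point. -/
open MeasureTheory Matrix

abbrev M2 := Matrix (Fin 2) (Fin 2) ℝ

noncomputable instance : MeasurableSpace M2 := borel M2

/-- The (topological) support of a measure: the points all of whose open neighbourhoods
have positive measure. -/
def msupport (μ : Measure M2) : Set M2 :=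
  {X | ∀ U : Set M2, IsOpen U → X ∈ U → 0 < μ U}

/-!
A nonzero singular `2 × 2` matrix is a tensor `u ⊗ a`, and
`det (u ⊗ a - v ⊗ b) = -(u ∧ v) (a ∧ b)`, so two rank-one differences that are rank-one
connected share their column vector or their row vector. Given `X₀, X₁ ∈ S` and a point `X₂ ∈ S`
off the line through them, `X₁ - X₀` and `X₂ - X₀` therefore span a plane `u ⊗ K²` (or `K² ⊗ a`)
of rank-one matrices. For every `X ∈ S`, `X - X₀` is rank one and rank-one connected to two
independent elements of that plane, and this forces it into the plane.
-/

namespace Matrix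

variable {K : Type*} [Field K]

def wedge (x y : Fin 2 → K) : K := x 0 * y 1 - x 1 * y 0

lemma wedge_anticomm (x y : Fin 2 → K) : wedge x y = -wedge y x := by
  unfold wedge; ring

lemma exists_eq_smul_of_wedge_eq_zero {x y : Fin 2 → K} (hx : x ≠ 0) (h : wedge x y = 0) :
    ∃ t : K, y = t • x := by
  unfold wedge at h
  obtain ⟨i, hi⟩ := Function.ne_iff.mp hx
  refine ⟨y i / x i, funext fun j => ?_⟩
  simp only [Pi.smul_apply, smul_eq_mul, Pi.zero_apply] at hi ⊢
  field_simp
  fin_cases i <;> fin_cases j <;> simp only [Fin.zero_eta, Fin.mk_one, Fin.isValue]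
  · linear_combination h
  · linear_combination -h

lemma eq_zero_of_wedge_eq_zero {a c b : Fin 2 → K} (hac : wedge a c ≠ 0)
    (ha : wedge b a = 0) (hc : wedge b c = 0) : b = 0 := by
  unfold wedge at ha hc
  have h0 : wedge a c * b 0 = 0 := by unfold wedge; linear_combination a 0 * hc - c 0 * ha
  have h1 : wedge a c * b 1 = 0 := by unfold wedge; linear_combination a 1 * hc - c 1 * ha
  funext i
  fin_cases i
  exacts [(mul_eq_zero.mp h0).resolve_left hac, (mul_eq_zero.mp h1).resolve_left hac]

lemma det_vecMulVec_sub_vecMulVec (u a v b : Fin 2 → K) :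
    (vecMulVec u a - vecMulVec v b).det = -(wedge u v * wedge a b) := by
  simp only [det_fin_two, sub_apply, vecMulVec_apply, wedge]
  ring

lemma exists_eq_vecMulVec_of_det_eq_zero {B : Matrix (Fin 2) (Fin 2) K} (hB : B.det = 0) :
    ∃ u a : Fin 2 → K, B = vecMulVec u a := by
  by_cases h0 : B.col 0 = 0
  · refine ⟨B.col 1, ![0, 1], ?_⟩
    ext i j
    fin_cases j
    · simpa using congrFun h0 i
    · simp
  · obtain ⟨t, ht⟩ := exists_eq_smul_of_wedge_eq_zero h0 (y := B.col 1) (by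
      simp only [wedge, col_apply]; rw [det_fin_two] at hB; linear_combination hB)
    refine ⟨B.col 0, ![1, t], ?_⟩
    ext i j
    fin_cases j
    · simp
    · simpa [mul_comm] using congrFun ht i

lemma exists_eq_vecMulVec_left_of_det_sub_eq_zero {u a c : Fin 2 → K} (hu : u ≠ 0)
    (hac : wedge a c ≠ 0) {D : Matrix (Fin 2) (Fin 2) K} (hD : D.det = 0)
    (ha : (D - vecMulVec u a).det = 0) (hc : (D - vecMulVec u c).det = 0) :
    ∃ w, D = vecMulVec u w := by
  obtain ⟨v, b, rfl⟩ := exists_eq_vecMulVec_of_det_eq_zero hD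
  rw [det_vecMulVec_sub_vecMulVec, neg_eq_zero] at ha hc
  by_cases huv : wedge u v = 0
  · obtain ⟨t, rfl⟩ := exists_eq_smul_of_wedge_eq_zero hu huv
    exact ⟨t • b, by rw [smul_vecMulVec, vecMulVec_smul]⟩
  · have hvu : wedge v u ≠ 0 := by rwa [wedge_anticomm, neg_ne_zero]
    have hb : b = 0 := eq_zero_of_wedge_eq_zero hac
      ((mul_eq_zero.mp ha).resolve_left hvu) ((mul_eq_zero.mp hc).resolve_left hvu)
    exact ⟨0, by rw [hb, vecMulVec_zero, vecMulVec_zero]⟩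

lemma exists_eq_vecMulVec_right_of_det_sub_eq_zero {a u v : Fin 2 → K} (ha : a ≠ 0)
    (huv : wedge u v ≠ 0) {D : Matrix (Fin 2) (Fin 2) K} (hD : D.det = 0)
    (hu : (D - vecMulVec u a).det = 0) (hv : (D - vecMulVec v a).det = 0) :
    ∃ w, D = vecMulVec w a := by
  obtain ⟨w, hw⟩ := exists_eq_vecMulVec_left_of_det_sub_eq_zero ha huv (D := Dᵀ)
    (by rwa [det_transpose])
    (by rwa [← transpose_vecMulVec, ← transpose_sub, det_transpose])
    (by rwa [← transpose_vecMulVec, ← transpose_sub, det_transpose])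
  exact ⟨w, by rw [← transpose_transpose D, hw, transpose_vecMulVec]⟩

lemma rank_pos_of_ne_zero {m n : Type*} [Finite m] [Fintype n] {A : Matrix m n K} (hA : A ≠ 0) :
    0 < A.rank := by
  rw [pos_iff_ne_zero, rank_eq_finrank_span_cols, Ne, Submodule.finrank_eq_zero,
    Submodule.span_eq_bot]
  contrapose! hA
  ext i j
  simpa using congrFun (hA _ ⟨j, rfl⟩) i

lemma injective_vecMulVecBilin {m n : Type*} {u : m → K} (hu : u ≠ 0) :
    Function.Injective (vecMulVecBilin K K u : (n → K) →ₗ[K] Matrix m n K) := by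
  rw [← LinearMap.ker_eq_bot, LinearMap.ker_eq_bot']
  intro w hw
  obtain ⟨i, hi⟩ := Function.ne_iff.mp hu
  funext j
  exact (mul_eq_zero.mp (congrFun (congrFun hw i) j)).resolve_left hi

lemma injective_vecMulVecBilin_flip {m n : Type*} {a : n → K} (ha : a ≠ 0) :
    Function.Injective ((vecMulVecBilin K K).flip a : (m → K) →ₗ[K] Matrix m n K) := by
  rw [← LinearMap.ker_eq_bot, LinearMap.ker_eq_bot']
  intro w hw
  obtain ⟨j, hj⟩ := Function.ne_iff.mp ha
  funext i
  exact (mul_eq_zero.mp (congrFun (congrFun hw i) j)).resolve_right hj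

lemma exists_affineSubspace_finrank_eq_two {m n : Type*} [Fintype n] {S : Set (Matrix m n K)}
    {X₀ : Matrix m n K} {f : (Fin 2 → K) →ₗ[K] Matrix m n K} (hf : Function.Injective f)
    (hr : ∀ w, (f w).rank ≤ 1) (hS : S ⊆ AffineSubspace.mk' X₀ (LinearMap.range f)) :
    ∃ P : AffineSubspace K (Matrix m n K), Module.finrank K P.direction = 2 ∧
      (∀ X ∈ P, ∀ Y ∈ P, (X - Y).rank ≤ 1) ∧ S ⊆ P := by
  refine ⟨_, ?_, fun X hX Y hY => ?_, hS⟩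
  · rw [AffineSubspace.direction_mk', LinearMap.finrank_range_of_inj hf, Module.finrank_fin_fun]
  · obtain ⟨w, hw⟩ := AffineSubspace.direction_mk' X₀ (LinearMap.range f) ▸
      AffineSubspace.vsub_mem_direction hX hY
    rw [← vsub_eq_sub, ← hw]
    exact hr w

section PairwiseSingular

variable {S : Set (Matrix (Fin 2) (Fin 2) K)} (hS : ∀ X ∈ S, ∀ Y ∈ S, (X - Y).det = 0)
include hS

lemma subset_mk'_range_vecMulVecBilin {X₀ : Matrix (Fin 2) (Fin 2) K} (hX₀ : X₀ ∈ S)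
    {u a c : Fin 2 → K} (hu : u ≠ 0) (hac : wedge a c ≠ 0) (ha : X₀ + vecMulVec u a ∈ S)
    (hc : X₀ + vecMulVec u c ∈ S) :
    S ⊆ AffineSubspace.mk' X₀ (LinearMap.range (vecMulVecBilin K K u)) := by
  intro X hX
  obtain ⟨w, hw⟩ := exists_eq_vecMulVec_left_of_det_sub_eq_zero hu hac (hS X hX X₀ hX₀)
    (by simpa only [sub_sub] using hS X hX _ ha) (by simpa only [sub_sub] using hS X hX _ hc)
  exact AffineSubspace.mem_mk'.mpr ⟨w, hw.symm⟩

lemma subset_mk'_range_vecMulVecBilin_flip {X₀ : Matrix (Fin 2) (Fin 2) K} (hX₀ : X₀ ∈ S)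
    {a u v : Fin 2 → K} (ha : a ≠ 0) (huv : wedge u v ≠ 0) (hu : X₀ + vecMulVec u a ∈ S)
    (hv : X₀ + vecMulVec v a ∈ S) :
    S ⊆ AffineSubspace.mk' X₀ (LinearMap.range ((vecMulVecBilin K K).flip a)) := by
  intro X hX
  obtain ⟨w, hw⟩ := exists_eq_vecMulVec_right_of_det_sub_eq_zero ha huv (hS X hX X₀ hX₀)
    (by simpa only [sub_sub] using hS X hX _ hu) (by simpa only [sub_sub] using hS X hX _ hv)
  exact AffineSubspace.mem_mk'.mpr ⟨w, hw.symm⟩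

lemma exists_rankOne_plane_of_ne_smul {X₀ : Matrix (Fin 2) (Fin 2) K} (hX₀ : X₀ ∈ S)
    {u a v b : Fin 2 → K} (hu : u ≠ 0) (ha : a ≠ 0) (hua : X₀ + vecMulVec u a ∈ S)
    (hvb : X₀ + vecMulVec v b ∈ S) (hne : ∀ t : K, vecMulVec v b ≠ t • vecMulVec u a) :
    ∃ P : AffineSubspace K (Matrix (Fin 2) (Fin 2) K), Module.finrank K P.direction = 2 ∧
      (∀ X ∈ P, ∀ Y ∈ P, (X - Y).rank ≤ 1) ∧ S ⊆ P := by
  have hcross : wedge v u * wedge b a = 0 := by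
    simpa [det_vecMulVec_sub_vecMulVec] using hS _ hvb _ hua
  rcases mul_eq_zero.mp hcross with hvu | hba
  · obtain ⟨t, rfl⟩ := exists_eq_smul_of_wedge_eq_zero hu (by rw [wedge_anticomm, hvu, neg_zero])
    rw [smul_vecMulVec, ← vecMulVec_smul] at hvb hne
    have hab : wedge a (t • b) ≠ 0 := fun h => by
      obtain ⟨s, hs⟩ := exists_eq_smul_of_wedge_eq_zero ha h
      exact hne s (by rw [hs, vecMulVec_smul])
    exact exists_affineSubspace_finrank_eq_two (injective_vecMulVecBilin hu)
      (fun w => rank_vecMulVec_le u w) (subset_mk'_range_vecMulVecBilin hS hX₀ hu hab hua hvb)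
  · obtain ⟨t, rfl⟩ := exists_eq_smul_of_wedge_eq_zero ha (by rw [wedge_anticomm, hba, neg_zero])
    rw [vecMulVec_smul, ← smul_vecMulVec] at hvb hne
    have huv : wedge u (t • v) ≠ 0 := fun h => by
      obtain ⟨s, hs⟩ := exists_eq_smul_of_wedge_eq_zero hu h
      exact hne s (by rw [hs, smul_vecMulVec])
    exact exists_affineSubspace_finrank_eq_two (injective_vecMulVecBilin_flip ha)
      (fun w => rank_vecMulVec_le w a)
      (subset_mk'_range_vecMulVecBilin_flip hS hX₀ ha huv hua hvb)

theorem exists_rankOne_plane_or_line_or_subsingleton :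
    (∃ P : AffineSubspace K (Matrix (Fin 2) (Fin 2) K), Module.finrank K P.direction = 2 ∧
        (∀ X ∈ P, ∀ Y ∈ P, (X - Y).rank ≤ 1) ∧ S ⊆ P) ∨
      (∃ A B : Matrix (Fin 2) (Fin 2) K, B.rank = 1 ∧ S ⊆ {X | ∃ t : K, X = A + t • B}) ∨
      S.Subsingleton := by
  rcases S.subsingleton_or_nontrivial with hsub | ⟨X₀, hX₀, X₁, hX₁, hne⟩
  · exact Or.inr (Or.inr hsub)
  obtain ⟨u, a, hB⟩ := exists_eq_vecMulVec_of_det_eq_zero (hS X₁ hX₁ X₀ hX₀)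
  have hB0 : vecMulVec u a ≠ 0 := hB ▸ sub_ne_zero.mpr hne.symm
  have hu : u ≠ 0 := by rintro rfl; simp at hB0
  have ha : a ≠ 0 := by rintro rfl; simp at hB0
  by_cases hline : ∀ X ∈ S, ∃ t : K, X = X₀ + t • vecMulVec u a
  · exact Or.inr (Or.inl ⟨X₀, vecMulVec u a,
      (rank_vecMulVec_le u a).antisymm (rank_pos_of_ne_zero hB0), hline⟩)
  push Not at hline
  obtain ⟨X₂, hX₂, hoff⟩ := hline
  obtain ⟨v, b, hC⟩ := exists_eq_vecMulVec_of_det_eq_zero (hS X₂ hX₂ X₀ hX₀)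
  refine Or.inl (exists_rankOne_plane_of_ne_smul hS hX₀ hu ha (by rwa [← hB, add_sub_cancel])
    (by rwa [← hC, add_sub_cancel]) fun t h => hoff t ?_)
  rw [← h, ← hC, add_sub_cancel]

end PairwiseSingular

end Matrix

theorem stmt10_general (μ : Measure M2)
    (hdet : ∀ X ∈ msupport μ, ∀ Y ∈ msupport μ, (X - Y).det = 0) :
    (∃ P : AffineSubspace ℝ M2, Module.finrank ℝ P.direction = 2 ∧
        (∀ X ∈ P, ∀ Y ∈ P, (X - Y).rank ≤ 1) ∧ msupport μ ⊆ (P : Set M2)) ∨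
      (∃ A B : M2, B.rank = 1 ∧ msupport μ ⊆ {X | ∃ t : ℝ, X = A + t • B}) ∨
      (msupport μ).Subsingleton :=
  Matrix.exists_rankOne_plane_or_line_or_subsingleton hdet

/-- If all pairwise differences of points of the support of a compactly supported
probability measure `μ` on `ℝ^{2×2}` are singular, then the support lies in a
2-dimensional affine plane of rank-one directions, or in a single rank-one line,
or is a single point (or empty). -/
theorem stmt10 (μ : Measure M2) [IsProbabilityMeasure μ]
    (hcomp : IsCompact (msupport μ))
    (hdet : ∀ X ∈ msupport μ, ∀ Y ∈ msupport μ, (X - Y).det = 0) :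
    (∃ P : AffineSubspace ℝ M2, Module.finrank ℝ P.direction = 2 ∧
        (∀ X ∈ P, ∀ Y ∈ P, (X - Y).rank ≤ 1) ∧ msupport μ ⊆ (P : Set M2)) ∨
      (∃ A B : M2, B.rank = 1 ∧ msupport μ ⊆ {X | ∃ t : ℝ, X = A + t • B}) ∨
      (msupport μ).Subsingleton :=
  stmt10_general μ hdet
end

section
/- Let μ be a compactly supported probability measure on ℝ^{2×2} such that det(X − Y) ≥ 0 for all X, Y in the support of μ and det μ̄ = ∫ det X dμ. Then det(X − Y) = 0 for all X, Y in the support of μ. -/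
open MeasureTheory Matrix

instance : BorelSpace M2 := ⟨rfl⟩

/-!
Write `det (X - Y) = det X + det Y - detPolar X Y`, where `detPolar` is the polar bilinear form of
the quadratic form `det`. Integrating against `μ ⊗ μ` and using bilinearity (compact support makes
everything integrable), `∫∫ det (X - Y) = 2 ∫ det - detPolar μ̄ μ̄ = 2 (∫ det - det μ̄) = 0`.
The integrand is nonnegative on the conull set `supp μ × supp μ`, so it vanishes `μ ⊗ μ`-a.e.;
being continuous, it then vanishes at every point of `supp μ × supp μ`, since `μ ⊗ μ` charges
every neighbourhood of such a point.
-/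

instance : SecondCountableTopology M2 :=
  inferInstanceAs (SecondCountableTopology (Fin 2 → Fin 2 → ℝ))

lemma msupport_eq_support (μ : Measure M2) : msupport μ = μ.support := by
  ext X
  rw [Measure.support_eq_forall_isOpen]
  exact forall_congr' fun U => forall_comm

theorem ContinuousOn.integrable_of_ae_mem_isCompact {α E : Type*} [TopologicalSpace α] [T2Space α]
    [MeasurableSpace α] [OpensMeasurableSpace α] [NormedAddCommGroup E] {μ : Measure α}
    [IsFiniteMeasure μ] {K : Set α} {f : α → E} (hf : ContinuousOn f K) (hK : IsCompact K)
    (hμK : ∀ᵐ x ∂μ, x ∈ K) : Integrable f μ := by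
  rw [← Measure.restrict_eq_self_of_ae_mem hμK]
  exact hf.integrableOn_compact hK

open Filter Topology in
theorem MeasureTheory.Measure.prod_pos_of_mem_support {α β : Type*} [TopologicalSpace α]
    [MeasurableSpace α] [TopologicalSpace β] [MeasurableSpace β] {μ : Measure α} {ν : Measure β}
    [SFinite ν] {x : α} {y : β} (hx : x ∈ μ.support) (hy : y ∈ ν.support) {W : Set (α × β)}
    (hW : W ∈ 𝓝 (x, y)) : 0 < μ.prod ν W := by
  obtain ⟨U, hU, V, hV, hUV⟩ := mem_nhds_prod_iff.1 hW
  calc 0 < μ U * ν V :=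
        ENNReal.mul_pos ((Measure.mem_support_iff_forall x).1 hx U hU).ne'
          ((Measure.mem_support_iff_forall y).1 hy V hV).ne'
    _ = μ.prod ν (U ×ˢ V) := (Measure.prod_prod U V).symm
    _ ≤ μ.prod ν W := measure_mono hUV

theorem Continuous.eq_zero_of_ae_eq_zero_of_mem_support {α β : Type*} [TopologicalSpace α]
    [MeasurableSpace α] [TopologicalSpace β] [MeasurableSpace β] {μ : Measure α} {ν : Measure β}
    [SFinite ν] {f : α × β → ℝ} (hf : Continuous f) (h0 : f =ᵐ[μ.prod ν] 0) {x : α} {y : β}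
    (hx : x ∈ μ.support) (hy : y ∈ ν.support) : f (x, y) = 0 := by
  by_contra hne
  have hpos := Measure.prod_pos_of_mem_support hx hy
    ((isOpen_ne_fun hf continuous_const).mem_nhds hne)
  exact hpos.ne' (ae_iff.1 h0)

noncomputable def barycenter (μ : Measure M2) : M2 := Matrix.of fun i j => ∫ X, X i j ∂μ

theorem integral_entry_mul_entry (μ ν : Measure M2) [SFinite μ] [SFinite ν] (i j k l : Fin 2) :
    ∫ z : M2 × M2, z.1 i j * z.2 k l ∂μ.prod ν = barycenter μ i j * barycenter ν k l :=
  integral_prod_mul (fun X : M2 => X i j) (fun Y : M2 => Y k l)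

/-- The polar form of the quadratic form `det`: `det (X + Y) = det X + det Y + detPolar X Y`. -/
def detPolar (X Y : M2) : ℝ := X 0 0 * Y 1 1 + X 1 1 * Y 0 0 - X 0 1 * Y 1 0 - X 1 0 * Y 0 1

theorem det_sub_eq (X Y : M2) : (X - Y).det = X.det + Y.det - detPolar X Y := by
  simp only [det_fin_two, Matrix.sub_apply, detPolar]
  ring

theorem detPolar_self (X : M2) : detPolar X X = 2 * X.det := by
  simp only [det_fin_two, detPolar]
  ring

section Integral

variable {μ ν : Measure M2} (hμ : ∀ i j, Integrable (fun X : M2 => X i j) μ)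
  (hν : ∀ i j, Integrable (fun Y : M2 => Y i j) ν)
include hμ hν

theorem integrable_detPolar : Integrable (fun z : M2 × M2 => detPolar z.1 z.2) (μ.prod ν) := by
  have h (i j k l : Fin 2) := (hμ i j).mul_prod (hν k l)
  unfold detPolar
  fun_prop

theorem integral_detPolar [SFinite μ] [SFinite ν] :
    ∫ z : M2 × M2, detPolar z.1 z.2 ∂μ.prod ν = detPolar (barycenter μ) (barycenter ν) := by
  have h (i j k l : Fin 2) := (hμ i j).mul_prod (hν k l)
  simp only [detPolar]
  rw [integral_sub, integral_sub, integral_add]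
  · simp only [integral_entry_mul_entry]
  all_goals fun_prop

variable [IsProbabilityMeasure μ] [IsProbabilityMeasure ν]
  (hdetμ : Integrable (fun X : M2 => X.det) μ) (hdetν : Integrable (fun Y : M2 => Y.det) ν)
include hdetμ hdetν

theorem integrable_det_sub : Integrable (fun z : M2 × M2 => (z.1 - z.2).det) (μ.prod ν) := by
  have hdet₁ := hdetμ.comp_fst ν
  have hdet₂ := hdetν.comp_snd μ
  have hpolar := integrable_detPolar hμ hν
  simp only [det_sub_eq]
  fun_prop

theorem integral_det_sub : ∫ z : M2 × M2, (z.1 - z.2).det ∂μ.prod ν =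
    ∫ X, X.det ∂μ + ∫ Y, Y.det ∂ν - detPolar (barycenter μ) (barycenter ν) := by
  have hdet₁ := hdetμ.comp_fst ν
  have hdet₂ := hdetν.comp_snd μ
  have hpolar := integrable_detPolar hμ hν
  simp only [det_sub_eq]
  rw [integral_sub, integral_add, integral_fun_fst, integral_fun_snd, integral_detPolar hμ hν]
  · simp only [probReal_univ, one_smul]
  all_goals fun_prop

end Integral

/-- If `det (X - Y) ≥ 0` on the support of a compactly supported probability measure `μ`
on `ℝ^{2×2}`, and the (entrywise) barycenter satisfies `det μ̄ = ∫ det X dμ`, then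
`det (X - Y) = 0` for all `X, Y` in the support of `μ`. -/
theorem stmt12 (μ : Measure M2) [IsProbabilityMeasure μ]
    (hcomp : IsCompact (msupport μ))
    (hpos : ∀ X ∈ msupport μ, ∀ Y ∈ msupport μ, 0 ≤ (X - Y).det)
    (B : M2) (hbar : ∀ i j, B i j = ∫ X, X i j ∂μ)
    (hdet : B.det = ∫ X, X.det ∂μ) :
    ∀ X ∈ msupport μ, ∀ Y ∈ msupport μ, (X - Y).det = 0 := by
  rw [msupport_eq_support] at hcomp hpos ⊢
  have hsupp : ∀ᵐ X ∂μ, X ∈ μ.support := Measure.support_mem_ae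
  have hint (f : M2 → ℝ) (hf : Continuous f) : Integrable f μ :=
    hf.continuousOn.integrable_of_ae_mem_isCompact hcomp hsupp
  have hcoord (i j : Fin 2) : Integrable (fun X : M2 => X i j) μ := hint _ (by fun_prop)
  have hdetint : Integrable (fun X : M2 => X.det) μ := hint _ continuous_id.matrix_det
  have hB : B = barycenter μ := Matrix.ext hbar
  have hmean : ∫ z : M2 × M2, (z.1 - z.2).det ∂μ.prod μ = 0 := by
    rw [integral_det_sub hcoord hcoord hdetint hdetint, ← hB, detPolar_self, ← hdet]
    ring
  have hnonneg : 0 ≤ᵐ[μ.prod μ] fun z : M2 × M2 => (z.1 - z.2).det := by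
    filter_upwards [Measure.quasiMeasurePreserving_fst.ae hsupp,
      Measure.quasiMeasurePreserving_snd.ae hsupp] with z h1 h2 using hpos _ h1 _ h2
  have hzero := (integral_eq_zero_iff_of_nonneg_ae hnonneg
    (integrable_det_sub hcoord hcoord hdetint hdetint)).1 hmean
  intro X hX Y hY
  exact (continuous_fst.sub continuous_snd).matrix_det.eq_zero_of_ae_eq_zero_of_mem_support
    hzero hX hY
end

section
/- Fix x₁ < x₂, y₂ < y₁, α₀, α₁, α₂, α₃ > 0 in ℝ. In the plane of 2×2 diagonal matrices, set P₀=(x₁,y₂), P₁=(x₁,y₁), P₂=(x₂,y₁), P₃=(x₂,y₂), A₀=(x₁,y₁+α₀), A₁=(x₂+α₁,y₁), A₂=(x₂,y₂−α₂), A₃=(x₁−α₃,y₂). Then for each i ∈ {0,1,2,3}, λᵢ := det(Aᵢ−A_{i+1}) / (det(Aᵢ−A_{i+1}) − det(Pᵢ−A_{i+1})) ∈ (0,1), where indices are taken mod 4 and det(a,b) of a point means the determinant of the corresponding diagonal matrix diag-difference, i.e., det((a,b)) = a·b. -/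
/-- Determinant of the diagonal matrix `diag(a, b)` identified with `(a, b) ∈ ℝ²`. -/
def det2 (p : ℝ × ℝ) : ℝ := p.1 * p.2

lemma aux_ratio (D E : ℝ) (h : D * E < 0) : D / (D - E) ∈ Set.Ioo (0 : ℝ) 1 := by
  rcases mul_neg_iff.mp h with ⟨hD, hE⟩ | ⟨hD, hE⟩
  · refine ⟨div_pos hD (by linarith), ?_⟩
    rw [div_lt_one (by linarith)]; linarith
  · refine ⟨div_pos_of_neg_of_neg hD (by linarith), ?_⟩
    rw [div_lt_one_of_neg (by linarith)]; linarith

/-- The coefficients `λᵢ = det(Aᵢ - A_{i+1}) / (det(Aᵢ - A_{i+1}) - det(Pᵢ - A_{i+1}))`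
lie in `(0, 1)`, for the `T₄`-type configuration of the non-compactness example. -/
theorem stmt15 (x₁ x₂ y₁ y₂ α₀ α₁ α₂ α₃ : ℝ)
    (hx : x₁ < x₂) (hy : y₂ < y₁)
    (hα₀ : 0 < α₀) (hα₁ : 0 < α₁) (hα₂ : 0 < α₂) (hα₃ : 0 < α₃)
    (P A : Fin 4 → ℝ × ℝ)
    (hP : P = ![(x₁, y₂), (x₁, y₁), (x₂, y₁), (x₂, y₂)])
    (hA : A = ![(x₁, y₁ + α₀), (x₂ + α₁, y₁), (x₂, y₂ - α₂), (x₁ - α₃, y₂)]) :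
    ∀ i : Fin 4,
      det2 (A i - A (i + 1)) / (det2 (A i - A (i + 1)) - det2 (P i - A (i + 1)))
        ∈ Set.Ioo (0 : ℝ) 1 := by
  subst hP hA
  intro i
  have key : ∀ k : Fin 4,
      det2 (![(x₁, y₁ + α₀), (x₂ + α₁, y₁), (x₂, y₂ - α₂), (x₁ - α₃, y₂)] k -
        ![(x₁, y₁ + α₀), (x₂ + α₁, y₁), (x₂, y₂ - α₂), (x₁ - α₃, y₂)] (k + 1)) *
      det2 (![(x₁, y₂), (x₁, y₁), (x₂, y₁), (x₂, y₂)] k -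
        ![(x₁, y₁ + α₀), (x₂ + α₁, y₁), (x₂, y₂ - α₂), (x₁ - α₃, y₂)] (k + 1)) < 0 := by
    intro k
    fin_cases k <;>
      simp [det2, Prod.sub_def, show ((0:Fin 4)+1) = 1 from rfl,
        show ((1:Fin 4)+1) = 2 from rfl, show ((2:Fin 4)+1) = 3 from rfl,
        show ((3:Fin 4)+1) = 0 from rfl]
    · exact mul_neg_of_neg_of_pos (mul_neg_of_neg_of_pos (by linarith) hα₀)
        (mul_pos_of_neg_of_neg (by linarith) (by linarith))
    · exact mul_neg_of_pos_of_neg (mul_pos hα₁ (by linarith))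
        (mul_neg_of_neg_of_pos (by linarith) (by linarith))
    · exact mul_pos (mul_pos (by linarith) hα₂) (mul_pos (by linarith) (by linarith))
    · exact mul_pos_of_neg_of_neg (mul_neg_of_pos_of_neg hα₃ (by linarith))
        (mul_neg_of_pos_of_neg (by linarith) (by linarith))
  exact aux_ratio _ _ (key i)
end

section
/- In the setting above, the set {(x,y,z) ∈ ℝ³ : z > 0} ∪ {A₀, A₁, A₂, A₃} (identified with upper triangular matrices) is lamination convex, contains K = {A₀, A₁, A₂, A₃, X₀}, and does not contain P₀. Consequently P₀ ∉ L(K) while P₀ ∈ closure(L(K)), so L(K) is not compact. -/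
/-- `S ⊆ ℝ³` (identified with upper triangular matrices `(x,y,z) ↦ [[x,z],[0,y]]`)
is lamination convex: whenever `p ≠ q` in `S` and the difference matrix has rank one,
i.e. `(p₁ - q₁)(p₂ - q₂) = 0`, the segment `[p, q]` lies in `S`. -/
def LamConvexTri (S : Set (ℝ × ℝ × ℝ)) : Prop :=
  ∀ p ∈ S, ∀ q ∈ S, p ≠ q → (p.1 - q.1) * (p.2.1 - q.2.1) = 0 → segment ℝ p q ⊆ S

/-- The lamination convex hull. -/
def LTri (K : Set (ℝ × ℝ × ℝ)) : Set (ℝ × ℝ × ℝ) :=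
  ⋂₀ {S | K ⊆ S ∧ LamConvexTri S}

/-!
A segment from a point with `z > 0` to a point with `z ≥ 0` lies in `{z > 0}` except possibly
for its second endpoint, and no two of the `Aᵢ` are rank-one connected; this is why
`{z > 0} ∪ {A₀, A₁, A₂, A₃}` is lamination convex.

Starting from `X₀` and moving along rank-one segments towards `A₀, A₁, A₂, A₃` in turn, one goes
once around the rectangle with corners `(xᵢ, yⱼ)` and returns above `P₀` at height `c z₀` for a
fixed `c ∈ (0, 1)`. Hence `P₀ + (0, 0, cⁿ z₀) ∈ L(K)` for all `n`.
-/

open Set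

lemma subset_LTri (K : Set (ℝ × ℝ × ℝ)) : K ⊆ LTri K :=
  fun _ hp => mem_sInter.2 fun _ hS => hS.1 hp

lemma LTri_subset {K S : Set (ℝ × ℝ × ℝ)} (hKS : K ⊆ S) (hS : LamConvexTri S) :
    LTri K ⊆ S :=
  fun _ hp => mem_sInter.1 hp S ⟨hKS, hS⟩

lemma lamConvexTri_LTri (K : Set (ℝ × ℝ × ℝ)) : LamConvexTri (LTri K) :=
  fun p hp q hq hne hrk _ hr => mem_sInter.2 fun S hS =>
    hS.2 p (mem_sInter.1 hp S hS) q (mem_sInter.1 hq S hS) hne hrk hr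

lemma div_sub_sub_mem_Ioo {a b w : ℝ} (hw : w ∈ uIoo a b) : (w - a) / (b - a) ∈ Ioo 0 1 := by
  rw [uIoo_eq_union] at hw
  rcases hw with ⟨haw, hwb⟩ | ⟨hbw, hwa⟩
  · exact ⟨div_pos (by linarith) (by linarith), (div_lt_one (by linarith)).2 (by linarith)⟩
  · exact ⟨div_pos_of_neg_of_neg (by linarith) (by linarith),
      (div_lt_one_of_neg (by linarith)).2 (by linarith)⟩

lemma mem_closure_of_mul_mem {S : Set (ℝ × ℝ × ℝ)} {x y z c : ℝ} (hc : |c| < 1)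
    (hz : (x, y, z) ∈ S) (hS : ∀ z, (x, y, z) ∈ S → (x, y, c * z) ∈ S) :
    (x, y, 0) ∈ closure S := by
  have hpow : ∀ n : ℕ, (x, y, c ^ n * z) ∈ S := by
    intro n
    induction n with
    | zero => simpa using hz
    | succ n ih => simpa [pow_succ', mul_assoc] using hS _ ih
  have hlim : Filter.Tendsto (fun n : ℕ => c ^ n * z) Filter.atTop (nhds 0) := by
    simpa using (tendsto_pow_atTop_nhds_zero_of_abs_lt_one hc).mul_const z
  exact mem_closure_of_tendsto
    (tendsto_const_nhds.prodMk_nhds (tendsto_const_nhds.prodMk_nhds hlim))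
    (Filter.Eventually.of_forall hpow)

theorem lamConvexTri_setOf_pos_union {F : Set (ℝ × ℝ × ℝ)} (hF : ∀ p ∈ F, 0 ≤ p.2.2)
    (hF₁ : InjOn Prod.fst F) (hF₂ : InjOn (fun p => p.2.1) F) :
    LamConvexTri ({p | 0 < p.2.2} ∪ F) := by
  intro p hp q hq hne hrk
  have hnonneg : ∀ s ∈ {p : ℝ × ℝ × ℝ | 0 < p.2.2} ∪ F, 0 ≤ s.2.2 :=
    fun s hs => hs.elim (fun h => h.le) (hF s)
  have hpos : 0 < p.2.2 ∨ 0 < q.2.2 := by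
    rcases hp with hp | hpF
    · exact Or.inl hp
    rcases hq with hq | hqF
    · exact Or.inr hq
    rcases mul_eq_zero.1 hrk with h | h
    · exact absurd (hF₁ hpF hqF (sub_eq_zero.1 h)) hne
    · exact absurd (hF₂ hpF hqF (sub_eq_zero.1 h)) hne
  rw [← insert_endpoints_openSegment]
  rintro r (rfl | rfl | ⟨a, b, ha, hb, -, rfl⟩)
  · exact hp
  · exact hq
  refine Or.inl (show 0 < a * p.2.2 + b * q.2.2 from ?_)
  rcases hpos with h | h
  · exact add_pos_of_pos_of_nonneg (mul_pos ha h) (mul_nonneg hb.le (hnonneg q hq))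
  · exact add_pos_of_nonneg_of_pos (mul_nonneg ha.le (hnonneg p hp)) (mul_pos hb h)

namespace LamConvexTri

variable {L : Set (ℝ × ℝ × ℝ)}

lemma segment_subset (hL : LamConvexTri L) {p q : ℝ × ℝ × ℝ} (hp : p ∈ L) (hq : q ∈ L)
    (hrk : (p.1 - q.1) * (p.2.1 - q.2.1) = 0) : segment ℝ p q ⊆ L := by
  rcases eq_or_ne p q with rfl | hne
  · simpa [segment_same] using hp
  · exact hL p hp q hq hne hrk

lemma lineMap_mem (hL : LamConvexTri L) {p q : ℝ × ℝ × ℝ} (hp : p ∈ L) (hq : q ∈ L)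
    (hrk : (p.1 - q.1) * (p.2.1 - q.2.1) = 0) {t : ℝ} (ht : t ∈ Icc 0 1) :
    AffineMap.lineMap p q t ∈ L :=
  hL.segment_subset hp hq hrk (segment_eq_image_lineMap ℝ p q ▸ mem_image_of_mem _ ht)

lemma mem_of_fst_eq (hL : LamConvexTri L) {x a b w z : ℝ} (hA : (x, a, 0) ∈ L)
    (hp : (x, b, z) ∈ L) (hw : w ∈ uIoo a b) : (x, w, (w - a) / (b - a) * z) ∈ L := by
  have hab : b - a ≠ 0 := sub_ne_zero.2 (nonempty_uIoo.1 ⟨w, hw⟩).symm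
  convert hL.lineMap_mem hA hp (by simp) (Ioo_subset_Icc_self (div_sub_sub_mem_Ioo hw)) using 1
  simp only [AffineMap.lineMap_apply_module, Prod.smul_mk, Prod.mk_add_mk, smul_eq_mul]
  ext <;> simp only <;> field_simp <;> ring

lemma mem_of_snd_eq (hL : LamConvexTri L) {y a b w z : ℝ} (hA : (a, y, 0) ∈ L)
    (hp : (b, y, z) ∈ L) (hw : w ∈ uIoo a b) : (w, y, (w - a) / (b - a) * z) ∈ L := by
  have hab : b - a ≠ 0 := sub_ne_zero.2 (nonempty_uIoo.1 ⟨w, hw⟩).symm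
  convert hL.lineMap_mem hA hp (by simp) (Ioo_subset_Icc_self (div_sub_sub_mem_Ioo hw)) using 1
  simp only [AffineMap.lineMap_apply_module, Prod.smul_mk, Prod.mk_add_mk, smul_eq_mul]
  ext <;> simp only <;> field_simp <;> ring

theorem corner_mem_closure (hL : LamConvexTri L) {x₁ x₂ y₁ y₂ b₀ b₁ b₂ b₃ z : ℝ}
    (h₀ : (x₁, b₀, 0) ∈ L) (h₁ : (b₁, y₁, 0) ∈ L) (h₂ : (x₂, b₂, 0) ∈ L) (h₃ : (b₃, y₂, 0) ∈ L)
    (hb₀ : y₁ ∈ uIoo b₀ y₂) (hb₁ : x₂ ∈ uIoo b₁ x₁) (hb₂ : y₂ ∈ uIoo b₂ y₁)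
    (hb₃ : x₁ ∈ uIoo b₃ x₂) (hz : (x₁, y₂, z) ∈ L) : (x₁, y₂, 0) ∈ closure L := by
  have hc : (y₁ - b₀) / (y₂ - b₀) * ((x₂ - b₁) / (x₁ - b₁)) * ((y₂ - b₂) / (y₁ - b₂)) *
      ((x₁ - b₃) / (x₂ - b₃)) ∈ Ioo 0 1 :=
    (⟨_, div_sub_sub_mem_Ioo hb₀⟩ * ⟨_, div_sub_sub_mem_Ioo hb₁⟩ * ⟨_, div_sub_sub_mem_Ioo hb₂⟩ *
      ⟨_, div_sub_sub_mem_Ioo hb₃⟩ : Ioo (0 : ℝ) 1).2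
  refine mem_closure_of_mul_mem (abs_of_pos hc.1 ▸ hc.2) hz fun z hz => ?_
  convert hL.mem_of_snd_eq h₃ (hL.mem_of_fst_eq h₂ (hL.mem_of_snd_eq h₁
    (hL.mem_of_fst_eq h₀ hz hb₀) hb₁) hb₂) hb₃ using 3
  ring

end LamConvexTri

/-- The set `{z > 0} ∪ {A₀, A₁, A₂, A₃}` is lamination convex, contains
`K = {A₀, A₁, A₂, A₃, X₀}` and omits `P₀`; hence `P₀ ∉ L(K)`, while `P₀ ∈ closure (L(K))`,
so `L(K)` is not compact. -/
theorem stmt17 (x₁ x₂ y₁ y₂ α₀ α₁ α₂ α₃ z₀ : ℝ)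
    (hx : x₁ < x₂) (hy : y₂ < y₁)
    (hα₀ : 0 < α₀) (hα₁ : 0 < α₁) (hα₂ : 0 < α₂) (hα₃ : 0 < α₃) (hz₀ : 0 < z₀)
    (P₀ A₀ A₁ A₂ A₃ X₀ : ℝ × ℝ × ℝ)
    (hP₀ : P₀ = (x₁, y₂, 0))
    (hA₀ : A₀ = (x₁, y₁ + α₀, 0)) (hA₁ : A₁ = (x₂ + α₁, y₁, 0))
    (hA₂ : A₂ = (x₂, y₂ - α₂, 0)) (hA₃ : A₃ = (x₁ - α₃, y₂, 0))
    (hX₀ : X₀ = P₀ + (0, 0, z₀)) :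
    LamConvexTri ({p : ℝ × ℝ × ℝ | 0 < p.2.2} ∪ {A₀, A₁, A₂, A₃}) ∧
      ({A₀, A₁, A₂, A₃, X₀} : Set (ℝ × ℝ × ℝ)) ⊆
        {p : ℝ × ℝ × ℝ | 0 < p.2.2} ∪ {A₀, A₁, A₂, A₃} ∧
      P₀ ∉ ({p : ℝ × ℝ × ℝ | 0 < p.2.2} ∪ {A₀, A₁, A₂, A₃}) ∧
      P₀ ∉ LTri {A₀, A₁, A₂, A₃, X₀} ∧
      P₀ ∈ closure (LTri {A₀, A₁, A₂, A₃, X₀}) ∧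
      ¬ IsCompact (LTri {A₀, A₁, A₂, A₃, X₀}) := by
  subst hP₀ hA₀ hA₁ hA₂ hA₃
  simp only [Prod.mk_add_mk, add_zero, zero_add] at hX₀
  subst hX₀
  set F : Set (ℝ × ℝ × ℝ) :=
    {(x₁, y₁ + α₀, 0), (x₂ + α₁, y₁, 0), (x₂, y₂ - α₂, 0), (x₁ - α₃, y₂, 0)} with hF
  set K : Set (ℝ × ℝ × ℝ) :=
    {(x₁, y₁ + α₀, 0), (x₂ + α₁, y₁, 0), (x₂, y₂ - α₂, 0), (x₁ - α₃, y₂, 0), (x₁, y₂, z₀)} with hK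
  have hS : LamConvexTri ({p | 0 < p.2.2} ∪ F) := by
    refine lamConvexTri_setOf_pos_union ?_ ?_ ?_
    · rintro p (rfl | rfl | rfl | rfl) <;> rfl
    all_goals rintro p (rfl | rfl | rfl | rfl) q (rfl | rfl | rfl | rfl) h <;>
      first | rfl | (exfalso; simp only at h; linarith)
  have hKS : K ⊆ {p | 0 < p.2.2} ∪ F := by
    rintro p (rfl | rfl | rfl | rfl | rfl) <;> simp [hF, hz₀]
  have hP₀S : (x₁, y₂, 0) ∉ {p | 0 < p.2.2} ∪ F := by
    simp only [hF, mem_union, mem_ofPred_eq, mem_insert_iff, mem_singleton_iff, Prod.mk.injEq]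
    rintro (h | ⟨-, h, -⟩ | ⟨h, -⟩ | ⟨h, -⟩ | ⟨h, -⟩) <;> linarith
  have hP₀L : (x₁, y₂, 0) ∉ LTri K := fun h => hP₀S (LTri_subset hKS hS h)
  have hP₀cl : (x₁, y₂, 0) ∈ closure (LTri K) := by
    refine (lamConvexTri_LTri K).corner_mem_closure (b₀ := y₁ + α₀) (b₁ := x₂ + α₁)
      (b₂ := y₂ - α₂) (b₃ := x₁ - α₃) (z := z₀) (subset_LTri K ?_) (subset_LTri K ?_)
      (subset_LTri K ?_) (subset_LTri K ?_) (mem_uIoo_of_gt hy ?_) (mem_uIoo_of_gt hx ?_)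
      (mem_uIoo_of_lt ?_ hy) (mem_uIoo_of_lt ?_ hx) (subset_LTri K ?_)
    all_goals first | linarith | simp [hK]
  exact ⟨hS, hKS, hP₀S, hP₀L, hP₀cl, fun hcpt => hP₀L (hcpt.isClosed.closure_subset hP₀cl)⟩
end
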